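/- Let a_1,…,a_m and b_1,…,b_m be nonnegative reals, and κ₁, κ₂ nonnegative reals such that for every i: ∑_{k≤i} b_k + b_i ≤ κ₂ and ∑_{k≤i} a_k + a_i ≤ κ₁. Then κ₁ ∑ b_i + κ₂ ∑ a_i − ∑ a_i b_i − (∑ a_i)(∑ b_i) ≥ (κ₁/4) ∑ b_i + (κ₂/4) ∑ a_i. -/
import Mathlib


open Finset

/-- Step 2a of Lemma irred-D: with nonnegative `a i`, `b i`, `κ₁`, `κ₂` satisfying the
partial-sum conditions `∑_{k≤i} b k + b i ≤ κ₂` and `∑_{k≤i} a k + a i ≤ κ₁`, one has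
`κ₁ ∑ b + κ₂ ∑ a − ∑ a_i b_i − (∑ a)(∑ b) ≥ (κ₁/4) ∑ b + (κ₂/4) ∑ a`. -/
theorem step2a_product_of_curves (m : ℕ) (a b : Fin m → ℝ) (κ₁ κ₂ : ℝ)
    (ha : ∀ i, 0 ≤ a i) (hb : ∀ i, 0 ≤ b i) (hκ₁ : 0 ≤ κ₁) (hκ₂ : 0 ≤ κ₂)
    (h1 : ∀ i, (∑ k ∈ Finset.Iic i, b k) + b i ≤ κ₂)
    (h2 : ∀ i, (∑ k ∈ Finset.Iic i, a k) + a i ≤ κ₁) :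
    κ₁ / 4 * ∑ i, b i + κ₂ / 4 * ∑ i, a i ≤
      κ₁ * ∑ i, b i + κ₂ * ∑ i, a i - (∑ i, a i * b i) - (∑ i, a i) * (∑ i, b i) := by
  rcases Nat.eq_zero_or_pos m with hm | hm
  · subst hm; simp
  · obtain ⟨n, rfl⟩ : ∃ n, m = n + 1 := ⟨m - 1, (Nat.succ_pred_eq_of_pos hm).symm⟩
    have hIic : Finset.Iic (Fin.last n) = Finset.univ := by
      ext x; simp [Fin.le_last]
    have hA0 : 0 ≤ ∑ i, a i := Finset.sum_nonneg fun i _ => ha i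
    have hB0 : 0 ≤ ∑ i, b i := Finset.sum_nonneg fun i _ => hb i
    have hA : ∑ i, a i ≤ κ₁ := by
      have := h2 (Fin.last n); rw [hIic] at this
      have := ha (Fin.last n); linarith
    have hB : ∑ i, b i ≤ κ₂ := by
      have := h1 (Fin.last n); rw [hIic] at this
      have := hb (Fin.last n); linarith
    have hai : ∀ i, a i ≤ κ₁ / 2 := by
      intro i
      have h := h2 i
      have : a i ≤ ∑ k ∈ Finset.Iic i, a k :=
        Finset.single_le_sum (fun k _ => ha k) (Finset.mem_Iic.mpr le_rfl)
      linarith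
    have hbi : ∀ i, b i ≤ κ₂ / 2 := by
      intro i
      have h := h1 i
      have : b i ≤ ∑ k ∈ Finset.Iic i, b k :=
        Finset.single_le_sum (fun k _ => hb k) (Finset.mem_Iic.mpr le_rfl)
      linarith
    have hab1 : ∑ i, a i * b i ≤ κ₁ / 2 * ∑ i, b i := by
      rw [Finset.mul_sum]
      exact Finset.sum_le_sum fun i _ =>
        mul_le_mul_of_nonneg_right (hai i) (hb i)
    have hab2 : ∑ i, a i * b i ≤ κ₂ / 2 * ∑ i, a i := by
      rw [Finset.mul_sum]
      refine Finset.sum_le_sum fun i _ => ?_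
      rw [mul_comm (κ₂ / 2)]
      exact mul_le_mul_of_nonneg_left (hbi i) (ha i)
    have hAB1 : (∑ i, a i) * ∑ i, b i ≤ κ₁ * ∑ i, b i :=
      mul_le_mul_of_nonneg_right hA hB0
    have hAB2 : (∑ i, a i) * ∑ i, b i ≤ κ₂ * ∑ i, a i := by
      rw [mul_comm]
      exact mul_le_mul_of_nonneg_right hB hA0
    linarith
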